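/- arXiv:1009.2009 — 4 statements merged into one kernel-verified Lean document; each statement's English description precedes it below -/
import Mathlib

section
/- The forward mass of the semi-Markov model satisfies the following recursion: for every j with 1 ≤ j ≤ T and every s ∈ S, α_j(s) = Σ_{i=2}^{j} Σ_{s' ∈ S} α_{i-1}(s') · A(s',s,i-1) · R(s,i,j) + R(s,1,j), where the sum over i is empty when j = 1. -/
/-- A segmentation of an interval is encoded as a nonempty list of pairs
(state, positive segment length).  `segPhi R A t0 ζ` is the joint potential of
the segmentation `ζ` of an interval starting at time `t0 + 1`: the product of
the segment potentials `R s (t_{k-1}+1) t_k` over all segments and of the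
transition potentials `A s_k s_{k+1} t_k` over consecutive segments. -/
noncomputable def segPhi {S : Type*} (R : S → ℕ → ℕ → ℝ) (A : S → S → ℕ → ℝ) :
    ℕ → List (S × ℕ) → ℝ
  | _, [] => 1
  | t0, [(s, l)] => R s (t0 + 1) (t0 + l)
  | t0, (s, l) :: (s', l') :: rest =>
      R s (t0 + 1) (t0 + l) * A s s' (t0 + l) *
        segPhi R A (t0 + l) ((s', l') :: rest)

/-- `IsSegmentation a b ζ` : the list `ζ` of (state, length) pairs is a
segmentation of the interval `[a, b]`: it is nonempty, all segment lengths are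
positive, and the lengths sum to `b - a + 1`. -/
def IsSegmentation {S : Type*} (a b : ℕ) (ζ : List (S × ℕ)) : Prop :=
  ζ ≠ [] ∧ (∀ p ∈ ζ, 0 < p.2) ∧ (ζ.map Prod.snd).sum = b + 1 - a

/-- The forward mass `α_j(s)` of the semi-Markov model: the sum of the joint
potentials of all segmentations of `[1, j]` whose last segment has state `s`. -/
noncomputable def fwdMass {S : Type*} (R : S → ℕ → ℕ → ℝ) (A : S → S → ℕ → ℝ)
    (j : ℕ) (s : S) : ℝ :=
  ∑ᶠ ζ ∈ {ζ : List (S × ℕ) |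
      IsSegmentation 1 j ζ ∧ Option.map Prod.fst ζ.getLast? = some s},
    segPhi R A 0 ζ

/-! Peel off the last segment: a segmentation of `[1, j]` ending in state `s` is either the
single segment `(s, [1, j])`, or, for a unique `i ∈ [2, j]`, a segmentation of `[1, i - 1]`
ending in some state `s'` followed by the segment `(s, [i, j])`, encoded as the pair
`(s, j + 1 - i)`. In the second case the joint potential factors as the potential of the
prefix times `A(s', s, i - 1) · R(s, i, j)`, and summing over the prefixes gives
`α_{i-1}(s') · A(s', s, i - 1) · R(s, i, j)`. -/

section Segmentations

variable {S : Type*}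

def segmentationsEndingIn (j : ℕ) (s : S) : Set (List (S × ℕ)) :=
  {ζ | IsSegmentation 1 j ζ ∧ Option.map Prod.fst ζ.getLast? = some s}

lemma isSegmentation_one_iff {n : ℕ} {ζ : List (S × ℕ)} :
    IsSegmentation 1 n ζ ↔
      ζ ≠ [] ∧ (∀ p ∈ ζ, 0 < p.2) ∧ (ζ.map Prod.snd).sum = n := by
  simp [IsSegmentation]

lemma pos_of_mem_segmentationsEndingIn {j : ℕ} {s : S} {ζ : List (S × ℕ)}
    (hζ : ζ ∈ segmentationsEndingIn j s) : 0 < j := by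
  obtain ⟨hne, hpos, hsum⟩ := isSegmentation_one_iff.1 hζ.1
  rw [← hsum]
  refine List.sum_pos _ (fun x hx => ?_) (by simpa using hne)
  obtain ⟨p, hp, rfl⟩ := List.mem_map.1 hx
  exact hpos p hp

lemma singleton_mem_segmentationsEndingIn {j : ℕ} (hj : 0 < j) (s : S) :
    [(s, j)] ∈ segmentationsEndingIn j s := by
  simp [segmentationsEndingIn, isSegmentation_one_iff, hj]

lemma append_mem_segmentationsEndingIn {i j : ℕ} {s s' : S} {ζ : List (S × ℕ)}
    (hζ : ζ ∈ segmentationsEndingIn (i - 1) s') (hij : i ≤ j) :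
    ζ ++ [(s, j + 1 - i)] ∈ segmentationsEndingIn j s := by
  have hi := pos_of_mem_segmentationsEndingIn hζ
  obtain ⟨-, hpos, hsum⟩ := isSegmentation_one_iff.1 hζ.1
  refine ⟨isSegmentation_one_iff.2 ⟨by simp, ?_, ?_⟩, by simp⟩
  · simp only [List.mem_append, List.mem_singleton]
    rintro p (hp | rfl)
    · exact hpos p hp
    · simp only; omega
  · simp only [List.map_append, List.sum_append, hsum, List.map_cons, List.map_nil,
      List.sum_cons, List.sum_nil]
    omega

lemma segmentationsEndingIn_subset (j : ℕ) (s : S) :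
    segmentationsEndingIn j s ⊆ insert [(s, j)] (⋃ p ∈ Set.Icc 2 j ×ˢ Set.univ,
      (· ++ [(s, j + 1 - p.1)]) '' segmentationsEndingIn (p.1 - 1) p.2) := by
  rintro ζ ⟨hseg, hlast⟩
  obtain ⟨hne, hpos, hsum⟩ := isSegmentation_one_iff.1 hseg
  obtain ⟨ζ', ⟨s₀, l⟩, rfl⟩ := (List.eq_nil_or_concat' ζ).resolve_left hne
  obtain rfl : s₀ = s := by simpa using hlast
  simp only [List.mem_append, List.mem_singleton, List.map_append, List.sum_append,
    List.map_cons, List.map_nil, List.sum_cons, List.sum_nil, add_zero] at hpos hsum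
  have hl : 0 < l := hpos _ (Or.inr rfl)
  rcases eq_or_ne ζ' [] with rfl | hne'
  · left
    simp_all
  · right
    have hζ' : ζ' ∈ segmentationsEndingIn (j + 1 - l - 1) (ζ'.getLast hne').1 :=
      ⟨isSegmentation_one_iff.2 ⟨hne', fun p hp => hpos p (Or.inl hp), by omega⟩,
        by simp [List.getLast?_eq_some_getLast hne']⟩
    have := pos_of_mem_segmentationsEndingIn hζ'
    simp only [Set.mem_iUnion, Set.mem_image, Set.mem_prod, Set.mem_Icc, Set.mem_univ, and_true,
      exists_prop, Prod.exists]
    exact ⟨j + 1 - l, _, ⟨by omega, by omega⟩, ζ', hζ', by congr 3; omega⟩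

lemma segmentationsEndingIn_eq {j : ℕ} (hj : 0 < j) (s : S) :
    segmentationsEndingIn j s = insert [(s, j)] (⋃ p ∈ Set.Icc 2 j ×ˢ Set.univ,
      (· ++ [(s, j + 1 - p.1)]) '' segmentationsEndingIn (p.1 - 1) p.2) := by
  refine (segmentationsEndingIn_subset j s).antisymm
    (Set.insert_subset (singleton_mem_segmentationsEndingIn hj s) ?_)
  refine Set.iUnion₂_subset fun p hp => Set.image_subset_iff.2 fun ζ hζ => ?_
  exact append_mem_segmentationsEndingIn hζ hp.1.2

lemma segmentationsEndingIn_finite [Finite S] (j : ℕ) (s : S) :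
    (segmentationsEndingIn j s).Finite := by
  induction j using Nat.strong_induction_on generalizing s with
  | _ j ih =>
    refine ((Set.Finite.biUnion ((Set.finite_Icc 2 j).prod Set.finite_univ) ?_).insert _).subset
      (segmentationsEndingIn_subset j s)
    rintro p ⟨hp, -⟩
    exact (ih _ (by obtain ⟨h₂, hj⟩ := hp; omega) _).image _

lemma finsum_mem_segmentationsEndingIn [Fintype S] {M : Type*} [AddCommMonoid M]
    (f : List (S × ℕ) → M) {j : ℕ} (hj : 0 < j) (s : S) :
    ∑ᶠ ζ ∈ segmentationsEndingIn j s, f ζ = f [(s, j)] +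
      ∑ i ∈ Finset.Icc 2 j, ∑ s' : S,
        ∑ᶠ ζ ∈ segmentationsEndingIn (i - 1) s', f (ζ ++ [(s, j + 1 - i)]) := by
  have hfin : ∀ p : ℕ × S,
      ((· ++ [(s, j + 1 - p.1)]) '' segmentationsEndingIn (p.1 - 1) p.2).Finite :=
    fun p => (segmentationsEndingIn_finite _ _).image _
  have hI : (Set.Icc 2 j ×ˢ (Set.univ : Set S)).Finite :=
    (Set.finite_Icc 2 j).prod Set.finite_univ
  have hdisj : (Set.Icc 2 j ×ˢ Set.univ).PairwiseDisjoint fun p : ℕ × S =>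
      (· ++ [(s, j + 1 - p.1)]) '' segmentationsEndingIn (p.1 - 1) p.2 := by
    rintro ⟨i₁, s₁⟩ ⟨⟨-, hi₁⟩, -⟩ ⟨i₂, s₂⟩ ⟨⟨-, hi₂⟩, -⟩ hne
    rw [Function.onFun, Set.disjoint_left]
    rintro _ ⟨ζ₁, hζ₁, rfl⟩ ⟨ζ₂, hζ₂, heq⟩
    obtain ⟨rfl, hlast⟩ := List.append_inj' heq rfl
    have hs : s₂ = s₁ := by simpa [hζ₁.2] using hζ₂.2.symm
    simp only [List.cons.injEq, Prod.mk.injEq, and_true, true_and] at hlast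
    exact hne (Prod.ext (by simp only; omega) hs.symm)
  have hsingle : [(s, j)] ∉ ⋃ p ∈ Set.Icc 2 j ×ˢ Set.univ,
      (· ++ [(s, j + 1 - p.1)]) '' segmentationsEndingIn (p.1 - 1) p.2 := by
    simp only [Set.mem_iUnion, Set.mem_image, not_exists, not_and]
    intro p _ ζ hζ heq
    have hlen := congrArg List.length heq
    simp only [List.length_append, List.length_cons, List.length_nil, zero_add,
      Nat.add_eq_right, List.length_eq_zero_iff] at hlen
    exact (isSegmentation_one_iff.1 hζ.1).1 hlen
  rw [segmentationsEndingIn_eq hj, finsum_mem_insert _ hsingle (hI.biUnion fun p _ => hfin p),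
    finsum_mem_biUnion hdisj hI fun p _ => hfin p]
  simp only [finsum_mem_image (List.append_left_injective _).injOn]
  rw [← Finset.coe_Icc, ← Finset.coe_univ, ← Finset.coe_product, finsum_mem_coe_finset,
    Finset.sum_product]

end Segmentations

section Potentials

variable {S : Type*} (R : S → ℕ → ℕ → ℝ) (A : S → S → ℕ → ℝ)

lemma segPhi_append_singleton : ∀ (t₀ : ℕ) (ζ : List (S × ℕ)) {s' : S},
    Option.map Prod.fst ζ.getLast? = some s' → ∀ (s : S) (l : ℕ),
      segPhi R A t₀ (ζ ++ [(s, l)]) =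
        segPhi R A t₀ ζ * A s' s (t₀ + (ζ.map Prod.snd).sum) *
          R s (t₀ + (ζ.map Prod.snd).sum + 1) (t₀ + (ζ.map Prod.snd).sum + l)
  | _, [], _, h, _, _ => by simp at h
  | t₀, [(a, b)], _, h, s, l => by
    obtain rfl : a = _ := by simpa using h
    simp [segPhi, add_assoc]
  | t₀, (a, b) :: (c, d) :: rest, s', h, s, l => by
    rw [List.cons_append, List.cons_append, segPhi, ← List.cons_append,
      segPhi_append_singleton (t₀ + b) ((c, d) :: rest) (by simpa using h), segPhi]
    simp only [List.map_cons, List.sum_cons]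
    ring_nf

lemma segPhi_append_of_mem_segmentationsEndingIn {i j : ℕ} {s s' : S} {ζ : List (S × ℕ)}
    (hζ : ζ ∈ segmentationsEndingIn (i - 1) s') (hij : i ≤ j) :
    segPhi R A 0 (ζ ++ [(s, j + 1 - i)]) = segPhi R A 0 ζ * A s' s (i - 1) * R s i j := by
  have hi := pos_of_mem_segmentationsEndingIn hζ
  rw [segPhi_append_singleton R A 0 ζ hζ.2, (isSegmentation_one_iff.1 hζ.1).2.2, zero_add,
    Nat.sub_add_cancel (by omega), show i - 1 + (j + 1 - i) = j by omega]

end Potentials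

theorem semiCRF_forward_recursion_general {S : Type*} [Fintype S]
    (R : S → ℕ → ℕ → ℝ) (A : S → S → ℕ → ℝ)
    (j : ℕ) (hj1 : 1 ≤ j) (s : S) :
    fwdMass R A j s =
      (∑ i ∈ Finset.Icc 2 j, ∑ s' : S,
          fwdMass R A (i - 1) s' * A s' s (i - 1) * R s i j)
        + R s 1 j := by
  rw [fwdMass, ← segmentationsEndingIn, finsum_mem_segmentationsEndingIn _ hj1, add_comm]
  congr 1
  · refine Finset.sum_congr rfl fun i hi => Finset.sum_congr rfl fun s' _ => ?_
    rw [fwdMass, ← segmentationsEndingIn, finsum_mem_mul, finsum_mem_mul]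
    exact finsum_mem_congr rfl fun ζ hζ =>
      segPhi_append_of_mem_segmentationsEndingIn R A hζ (Finset.mem_Icc.1 hi).2
  · simp [segPhi]

/-- Forward recursion for the semi-Markov model: for `1 ≤ j ≤ T` and `s ∈ S`,
`α_j(s) = Σ_{i=2}^{j} Σ_{s'} α_{i-1}(s') · A(s',s,i-1) · R(s,i,j) + R(s,1,j)`. -/
theorem semiCRF_forward_recursion {S : Type*} [Fintype S] [Nonempty S]
    (T : ℕ) (hT : 1 ≤ T)
    (R : S → ℕ → ℕ → ℝ) (A : S → S → ℕ → ℝ)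
    (j : ℕ) (hj1 : 1 ≤ j) (hjT : j ≤ T) (s : S) :
    fwdMass R A j s =
      (∑ i ∈ Finset.Icc 2 j, ∑ s' : S,
          fwdMass R A (i - 1) s' * A s' s (i - 1) * R s i j)
        + R s 1 j :=
  semiCRF_forward_recursion_general R A j hj1 s
end

section
/- The backward mass of the semi-Markov model satisfies the following recursion: for every i with 1 ≤ i ≤ T and every s ∈ S, β_i(s) = Σ_{j=i}^{T-1} Σ_{s' ∈ S} R(s,i,j) · A(s,s',j) · β_{j+1}(s') + R(s,i,T), where the sum over j is empty when i = T. -/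
/-- The backward mass `β_i(s)` of the semi-Markov model: the sum of the joint
potentials of all segmentations of `[i, T]` whose first segment has state `s`. -/
noncomputable def bwdMass {S : Type*} (R : S → ℕ → ℕ → ℝ) (A : S → S → ℕ → ℝ)
    (T : ℕ) (i : ℕ) (s : S) : ℝ :=
  ∑ᶠ ζ ∈ {ζ : List (S × ℕ) |
      IsSegmentation i T ζ ∧ Option.map Prod.fst ζ.head? = some s},
    segPhi R A (i - 1) ζ

/-!
Classify a segmentation of `[i, T]` with first state `s` by its first segment: either that
segment is all of `[i, T]`, contributing `R(s,i,T)`, or it ends at some `j < T` and is followed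
by a segmentation of `[j+1, T]` with some first state `s'`. These cases partition the finite set
of segmentations, and in the second case the potential factors as
`R(s,i,j) · A(s,s',j) · Φ[rest]`, so summing over the rest gives `β_{j+1}(s')`.
-/

open Set

lemma List.finite_setOf_length_le_of_forall_mem {α : Type*} {K : Set α} (hK : K.Finite)
    (n : ℕ) : {l : List α | l.length ≤ n ∧ ∀ a ∈ l, a ∈ K}.Finite := by
  have := hK.to_subtype
  refine ((List.finite_length_le K n).image (List.map Subtype.val)).subset ?_
  rintro l ⟨hlen, hlK⟩
  exact ⟨l.pmap Subtype.mk hlK, by simpa using hlen, by simp [List.map_pmap]⟩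

section Segmentation

variable {S : Type*}

lemma finite_setOf_forall_pos_sum_eq [Finite S] (n : ℕ) :
    {ζ : List (S × ℕ) | (∀ p ∈ ζ, 0 < p.2) ∧ (ζ.map Prod.snd).sum = n}.Finite := by
  refine (List.finite_setOf_length_le_of_forall_mem
    ((Set.finite_univ (α := S)).prod (Set.finite_Iic n)) n).subset ?_
  rintro ζ ⟨hpos, rfl⟩
  refine ⟨?_, fun p hp =>
    ⟨trivial, List.le_sum_of_mem (List.mem_map_of_mem (f := Prod.snd) hp)⟩⟩
  simpa using List.length_le_sum_of_one_le (ζ.map Prod.snd) fun x hx => by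
    obtain ⟨p, hp, rfl⟩ := List.mem_map.mp hx
    exact hpos p hp

lemma isSegmentation_singleton_iff {a b l : ℕ} {s : S} :
    IsSegmentation a b [(s, l)] ↔ 0 < l ∧ l = b + 1 - a := by
  simp [IsSegmentation]

lemma isSegmentation_cons_iff {a b l : ℕ} {s : S} {ζ : List (S × ℕ)} (hζ : ζ ≠ []) :
    IsSegmentation a b ((s, l) :: ζ) ↔ 0 < l ∧ a + l ≤ b ∧ IsSegmentation (a + l) b ζ := by
  simp only [IsSegmentation, List.mem_cons, forall_eq_or_imp, List.map_cons, List.sum_cons]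
  constructor
  · rintro ⟨-, ⟨hl, hpos⟩, hsum⟩
    obtain ⟨p, hp⟩ := List.exists_mem_of_ne_nil ζ hζ
    have hp_le : p.2 ≤ (ζ.map Prod.snd).sum :=
      List.le_sum_of_mem (List.mem_map_of_mem (f := Prod.snd) hp)
    have hp_pos := hpos p hp
    exact ⟨hl, by omega, hζ, hpos, by omega⟩
  · rintro ⟨hl, hab, -, hpos, hsum⟩
    exact ⟨List.cons_ne_nil _ _, ⟨hl, hpos⟩, by omega⟩

def segmentationsFrom (T i : ℕ) (s : S) : Set (List (S × ℕ)) :=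
  {ζ | IsSegmentation i T ζ ∧ Option.map Prod.fst ζ.head? = some s}

lemma finite_segmentationsFrom [Finite S] (T i : ℕ) (s : S) :
    (segmentationsFrom T i s).Finite :=
  (finite_setOf_forall_pos_sum_eq (T + 1 - i)).subset fun _ h => h.1.2

lemma ne_nil_of_mem_segmentationsFrom {T i : ℕ} {s : S} {ζ : List (S × ℕ)}
    (h : ζ ∈ segmentationsFrom T i s) : ζ ≠ [] :=
  h.1.1

lemma segmentationsFrom_eq_union [Fintype S] {T i : ℕ} (hi1 : 1 ≤ i) (hiT : i ≤ T) (s : S) :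
    segmentationsFrom T i s = {[(s, T + 1 - i)]} ∪
      ⋃ p ∈ (↑(Finset.Icc i (T - 1) ×ˢ (Finset.univ : Finset S)) : Set (ℕ × S)),
        List.cons (s, p.1 + 1 - i) '' segmentationsFrom T (p.1 + 1) p.2 := by
  ext ζ
  simp only [mem_union, mem_singleton_iff, mem_iUnion, mem_image, Finset.coe_product,
    Finset.coe_Icc, Finset.coe_univ, mem_prod, mem_Icc, mem_univ,
    and_true, exists_prop, Prod.exists]
  constructor
  · rintro ⟨hseg, hhead⟩
    match ζ, hseg, hhead with
    | [(s₀, l)], hseg, hhead =>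
      obtain rfl : s₀ = s := by simpa using hhead
      rw [isSegmentation_singleton_iff] at hseg
      exact Or.inl (by rw [hseg.2])
    | (s₀, l) :: (s', l') :: rest, hseg, hhead =>
      obtain rfl : s₀ = s := by simpa using hhead
      obtain ⟨hl, hle, hrest⟩ := (isSegmentation_cons_iff (List.cons_ne_nil _ _)).mp hseg
      refine Or.inr ⟨i + l - 1, s', by omega, (s', l') :: rest, ⟨?_, rfl⟩, ?_⟩
      · rwa [show i + l - 1 + 1 = i + l by omega]
      · rw [show i + l - 1 + 1 - i = l by omega]
  · rintro (rfl | ⟨j, s', hj, ζ', hζ', rfl⟩)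
    · exact ⟨isSegmentation_singleton_iff.mpr ⟨by omega, rfl⟩, rfl⟩
    · refine ⟨?_, rfl⟩
      rw [isSegmentation_cons_iff (ne_nil_of_mem_segmentationsFrom hζ'),
        show i + (j + 1 - i) = j + 1 by omega]
      exact ⟨by omega, by omega, hζ'.1⟩

lemma cons_image_segmentationsFrom_pairwiseDisjoint {T i : ℕ} (s : S) {J : Set (ℕ × S)}
    (hJ : ∀ p ∈ J, i ≤ p.1) :
    J.PairwiseDisjoint fun p =>
      List.cons (s, p.1 + 1 - i) '' segmentationsFrom T (p.1 + 1) p.2 := by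
  rintro p hp q hq hpq
  refine Set.disjoint_left.mpr ?_
  rintro _ ⟨ζ, hζ, rfl⟩ ⟨ζ', hζ', heq⟩
  simp only [List.cons.injEq, Prod.mk.injEq, true_and] at heq
  obtain ⟨hlen, rfl⟩ := heq
  have hip := hJ p hp
  have hiq := hJ q hq
  refine hpq (Prod.ext (by omega) ?_)
  simpa [hζ.2] using hζ'.2

lemma singleton_notMem_cons_image_segmentationsFrom {T j : ℕ} {p q : S × ℕ} {s : S} :
    [p] ∉ List.cons q '' segmentationsFrom T j s := by
  rintro ⟨ζ, hζ, heq⟩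
  exact ne_nil_of_mem_segmentationsFrom hζ (List.cons.inj heq).2

end Segmentation

section Potential

variable {S : Type*} (R : S → ℕ → ℕ → ℝ) (A : S → S → ℕ → ℝ)

lemma segPhi_singleton (t₀ l : ℕ) (s : S) : segPhi R A t₀ [(s, l)] = R s (t₀ + 1) (t₀ + l) :=
  rfl

lemma segPhi_cons_of_head? {t₀ l : ℕ} {s s' : S} {ζ : List (S × ℕ)}
    (h : Option.map Prod.fst ζ.head? = some s') :
    segPhi R A t₀ ((s, l) :: ζ) =
      R s (t₀ + 1) (t₀ + l) * A s s' (t₀ + l) * segPhi R A (t₀ + l) ζ := by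
  match ζ, h with
  | (s'', l') :: rest, h =>
    obtain rfl : s'' = s' := by simpa using h
    rfl

lemma bwdMass_eq_finsum_segmentationsFrom (T i : ℕ) (s : S) :
    bwdMass R A T i s = ∑ᶠ ζ ∈ segmentationsFrom T i s, segPhi R A (i - 1) ζ :=
  rfl

lemma finsum_segPhi_cons_image_segmentationsFrom {T i j : ℕ} (hi1 : 1 ≤ i) (hij : i ≤ j)
    (s s' : S) :
    ∑ᶠ ζ ∈ List.cons (s, j + 1 - i) '' segmentationsFrom T (j + 1) s', segPhi R A (i - 1) ζ =
      R s i j * A s s' j * bwdMass R A T (j + 1) s' := by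
  have hstart : i - 1 + 1 = i := by omega
  have hend : i - 1 + (j + 1 - i) = j := by omega
  rw [finsum_mem_image List.cons_injective.injOn, bwdMass_eq_finsum_segmentationsFrom,
    Nat.add_sub_cancel, mul_finsum_mem]
  refine finsum_mem_congr rfl fun ζ hζ => ?_
  rw [segPhi_cons_of_head? R A hζ.2, hstart, hend]

end Potential

theorem semiCRF_backward_recursion_general {S : Type*} [Fintype S]
    (T : ℕ)
    (R : S → ℕ → ℕ → ℝ) (A : S → S → ℕ → ℝ)
    (i : ℕ) (hi1 : 1 ≤ i) (hiT : i ≤ T) (s : S) :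
    bwdMass R A T i s =
      (∑ j ∈ Finset.Icc i (T - 1), ∑ s' : S,
          R s i j * A s s' j * bwdMass R A T (j + 1) s')
        + R s i T := by
  set J : Set (ℕ × S) := ↑(Finset.Icc i (T - 1) ×ˢ (Finset.univ : Finset S))
  have hJ : ∀ p ∈ J, i ≤ p.1 := fun p hp => (Finset.mem_Icc.mp (Finset.mem_product.mp hp).1).1
  have hfin : ∀ p ∈ J,
      (List.cons (s, p.1 + 1 - i) '' segmentationsFrom T (p.1 + 1) p.2).Finite :=
    fun p _ => (finite_segmentationsFrom T (p.1 + 1) p.2).image _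
  have hdisj : Disjoint {[(s, T + 1 - i)]}
      (⋃ p ∈ J, List.cons (s, p.1 + 1 - i) '' segmentationsFrom T (p.1 + 1) p.2) := by
    simp only [disjoint_singleton_left, mem_iUnion₂, not_exists]
    exact fun _ _ => singleton_notMem_cons_image_segmentationsFrom
  rw [bwdMass_eq_finsum_segmentationsFrom, segmentationsFrom_eq_union hi1 hiT,
    finsum_mem_union hdisj (finite_singleton _) ((Finset.finite_toSet _).biUnion hfin),
    finsum_mem_singleton, finsum_mem_biUnion
      (cons_image_segmentationsFrom_pairwiseDisjoint s hJ) (Finset.finite_toSet _) hfin,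
    finsum_mem_coe_finset, Finset.sum_product, segPhi_singleton,
    show i - 1 + 1 = i by omega, show i - 1 + (T + 1 - i) = T by omega, add_comm]
  congr 1
  refine Finset.sum_congr rfl fun j hj => Finset.sum_congr rfl fun s' _ => ?_
  exact finsum_segPhi_cons_image_segmentationsFrom R A hi1 (Finset.mem_Icc.mp hj).1 s s'

/-- Backward recursion for the semi-Markov model: for `1 ≤ i ≤ T` and `s ∈ S`,
`β_i(s) = Σ_{j=i}^{T-1} Σ_{s'} R(s,i,j) · A(s,s',j) · β_{j+1}(s') + R(s,i,T)`. -/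
theorem semiCRF_backward_recursion {S : Type*} [Fintype S] [Nonempty S]
    (T : ℕ) (hT : 1 ≤ T)
    (R : S → ℕ → ℕ → ℝ) (A : S → S → ℕ → ℝ)
    (i : ℕ) (hi1 : 1 ≤ i) (hiT : i ≤ T) (s : S) :
    bwdMass R A T i s =
      (∑ j ∈ Finset.Icc i (T - 1), ∑ s' : S,
          R s i j * A s s' j * bwdMass R A T (j + 1) s')
        + R s i T :=
  semiCRF_backward_recursion_general T R A i hi1 hiT s
end

section
/- In the semi-Markov model, the total potential of all segmentations of [1,T] containing a prescribed segment factorizes through the forward and backward masses: for all s ∈ S and 1 ≤ i ≤ j ≤ T, the sum of Φ[ζ] over all segmentations ζ of [1,T] having a segment with state s spanning exactly [i,j] equals Lft(s,i) · R(s,i,j) · Rgt(s,j), where Lft(s,i) = Σ_{s' ∈ S} α_{i-1}(s') · A(s',s,i-1) if i > 1 and Lft(s,1) = 1, and Rgt(s,j) = Σ_{s'' ∈ S} A(s,s'',j) · β_{j+1}(s'') if j < T and Rgt(s,T) = 1. -/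
/-- `HasSegment s i j t0 ζ` : the segmentation `ζ` of an interval starting at
time `t0 + 1` contains a segment with state `s` spanning exactly `[i, j]`. -/
def HasSegment {S : Type*} (s : S) (i j : ℕ) : ℕ → List (S × ℕ) → Prop
  | _, [] => False
  | t0, (s', l) :: rest =>
      (s' = s ∧ t0 + 1 = i ∧ t0 + l = j) ∨ HasSegment s i j (t0 + l) rest

/-- `segMass R A T s i j` : the sum of the joint potentials of all segmentations
of `[1, T]` having a segment with state `s` spanning exactly `[i, j]`. -/
noncomputable def segMass {S : Type*} (R : S → ℕ → ℕ → ℝ) (A : S → S → ℕ → ℝ)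
    (T : ℕ) (s : S) (i j : ℕ) : ℝ :=
  ∑ᶠ ζ ∈ {ζ : List (S × ℕ) | IsSegmentation 1 T ζ ∧ HasSegment s i j 0 ζ},
    segPhi R A 0 ζ

/-!
A segmentation of `[1, T]` containing the segment `(s, [i, j])` splits uniquely as
`L ++ (s, j + 1 - i) :: M`, where `L` and `M` are arbitrary (possibly empty) segmentations of
`[1, i - 1]` and `[j + 1, T]`. Its potential is the product of the potential of `L` with the
transition into `s`, of `R(s, i, j)`, and of the transition out of `s` with the potential of `M`,
so the sum over all such segmentations is a product of a sum over `L` and a sum over `M`.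
Grouping `L` by its last state and `M` by its first state turns these into the forward and
backward terms.
-/

theorem finsum_mem_eq_sum_fiberwise {α β M : Type*} [Fintype β] [AddCommMonoid M] {X : Set α}
    (hX : X.Finite) (g : α → Option β) (hg : ∀ a ∈ X, g a ≠ none) (f : α → M) :
    ∑ᶠ a ∈ X, f a = ∑ b, ∑ᶠ a ∈ {a | a ∈ X ∧ g a = some b}, f a := by
  have hcover : X = ⋃ b, {a | a ∈ X ∧ g a = some b} := by
    ext a
    simpa using fun ha => Option.ne_none_iff_exists'.1 (hg a ha)
  have hdisj : Pairwise (Function.onFun Disjoint fun b => {a | a ∈ X ∧ g a = some b}) :=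
    fun b b' hbb' => Set.disjoint_left.2 fun a ha ha' =>
      hbb' (Option.some_injective _ (ha.2.symm.trans ha'.2))
  conv_lhs => rw [hcover]
  rw [finsum_mem_iUnion hdisj fun b => hX.subset fun a ha => ha.1, finsum_eq_sum_of_fintype]

theorem finsum_mem_prod_mul {α β R : Type*} [CommSemiring R] {X : Set α} {Y : Set β}
    (hX : X.Finite) (hY : Y.Finite) (f : α → R) (g : β → R) :
    ∑ᶠ p ∈ X ×ˢ Y, f p.1 * g p.2 = (∑ᶠ a ∈ X, f a) * ∑ᶠ b ∈ Y, g b := by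
  rw [finsum_mem_eq_finite_toFinset_sum _ (hX.prod hY), finsum_mem_eq_finite_toFinset_sum _ hX,
    finsum_mem_eq_finite_toFinset_sum _ hY, ← Set.Finite.toFinset_prod, Finset.sum_product,
    Finset.sum_mul_sum]

section

variable {S : Type*}

/-- Unlike `IsSegmentation`, this admits the empty list when `n = 0`: it encodes the possibly
empty context on either side of a prescribed segment. -/
def IsComposition (n : ℕ) (ζ : List (S × ℕ)) : Prop :=
  (∀ p ∈ ζ, 0 < p.2) ∧ (ζ.map Prod.snd).sum = n

theorem isComposition_zero_iff {ζ : List (S × ℕ)} : IsComposition 0 ζ ↔ ζ = [] := by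
  refine ⟨fun ⟨hpos, hsum⟩ => ?_, by rintro rfl; simp [IsComposition]⟩
  rcases ζ with _ | ⟨p, ζ⟩
  · rfl
  · have := hpos p List.mem_cons_self
    simp at hsum
    omega

theorem isSegmentation_iff {a b : ℕ} {ζ : List (S × ℕ)} :
    IsSegmentation a b ζ ↔ a ≤ b ∧ IsComposition (b + 1 - a) ζ := by
  refine ⟨fun ⟨hne, hζ⟩ => ⟨?_, hζ⟩, fun ⟨hab, hζ⟩ => ⟨?_, hζ⟩⟩
  · by_contra! hba
    exact hne (isComposition_zero_iff.1 (by rwa [show b + 1 - a = 0 by omega] at hζ))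
  · rintro rfl
    have := hζ.2
    simp at this
    omega

namespace IsComposition

variable {n : ℕ} {ζ : List (S × ℕ)}

theorem length_le (h : IsComposition n ζ) : ζ.length ≤ n := by
  simpa [h.2] using List.length_le_sum_of_one_le (ζ.map Prod.snd) fun x hx => by
    obtain ⟨p, hp, rfl⟩ := List.mem_map.1 hx
    exact h.1 p hp

theorem snd_le (h : IsComposition n ζ) {p : S × ℕ} (hp : p ∈ ζ) : p.2 ≤ n :=
  h.2 ▸ List.le_sum_of_mem (List.mem_map_of_mem hp)

theorem eq_nil_of_append {D : List (S × ℕ)} (h : IsComposition n ζ)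
    (h' : IsComposition n (ζ ++ D)) : D = [] := by
  refine isComposition_zero_iff.1 ⟨fun p hp => h'.1 p (List.mem_append_right _ hp), ?_⟩
  have := h'.2
  simp only [List.map_append, List.sum_append, h.2] at this
  omega

theorem eq_of_append_eq_append {L₁ L₂ M₁ M₂ : List (S × ℕ)} (h₁ : IsComposition n L₁)
    (h₂ : IsComposition n L₂) (h : L₁ ++ M₁ = L₂ ++ M₂) : L₁ = L₂ := by
  rcases List.append_eq_append_iff.1 h with ⟨D, rfl, -⟩ | ⟨D, rfl, -⟩
  · simp [h₁.eq_nil_of_append h₂]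
  · simp [h₂.eq_nil_of_append h₁]

end IsComposition

theorem isComposition_finite [Finite S] (n : ℕ) :
    {ζ : List (S × ℕ) | IsComposition n ζ}.Finite := by
  have : Finite {p : S × ℕ // p.2 ≤ n} :=
    ((Set.finite_univ.prod (Set.finite_Iic n)).subset fun p hp => ⟨trivial, hp⟩).to_subtype
  refine ((List.finite_length_le {p : S × ℕ // p.2 ≤ n} n).image (List.map Subtype.val)).subset
    fun ζ hζ => ?_
  lift ζ to List {p : S × ℕ // p.2 ≤ n} using fun p hp => hζ.snd_le hp
  exact ⟨ζ, by simpa using hζ.length_le, rfl⟩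

theorem hasSegment_iff {s : S} {i j t₀ : ℕ} {ζ : List (S × ℕ)} :
    HasSegment s i j t₀ ζ ↔ ∃ L l M, ζ = L ++ (s, l) :: M ∧
      t₀ + (L.map Prod.snd).sum + 1 = i ∧ t₀ + (L.map Prod.snd).sum + l = j := by
  induction ζ generalizing t₀ with
  | nil => simp [HasSegment]
  | cons p ζ ih =>
    obtain ⟨s', l'⟩ := p
    rw [HasSegment, ih]
    constructor
    · rintro (⟨rfl, h₁, h₂⟩ | ⟨L, l, M, rfl, h₁, h₂⟩)
      · exact ⟨[], l', ζ, rfl, by simpa using h₁, by simpa using h₂⟩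
      · exact ⟨(s', l') :: L, l, M, rfl, by simp; omega, by simp; omega⟩
    · rintro ⟨_ | ⟨q, L⟩, l, M, h, h₁, h₂⟩
      · simp only [List.nil_append, List.cons.injEq, Prod.mk.injEq] at h
        obtain ⟨⟨rfl, rfl⟩, rfl⟩ := h
        exact Or.inl ⟨rfl, by simpa using h₁, by simpa using h₂⟩
      · simp only [List.cons_append, List.cons.injEq] at h
        obtain ⟨rfl, rfl⟩ := h
        simp only [List.map_cons, List.sum_cons] at h₁ h₂
        exact Or.inr ⟨L, l, M, rfl, by omega, by omega⟩

section Potential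

variable (R : S → ℕ → ℕ → ℝ) (A : S → S → ℕ → ℝ)

noncomputable def segPhiInto (t₀ : ℕ) (L : List (S × ℕ)) (s : S) : ℝ :=
  L.getLast?.elim 1 fun q => segPhi R A t₀ L * A q.1 s (t₀ + (L.map Prod.snd).sum)

noncomputable def segPhiFrom (s : S) (t : ℕ) (M : List (S × ℕ)) : ℝ :=
  M.head?.elim 1 fun q => A s q.1 t * segPhi R A t M

theorem segPhi_cons (t₀ : ℕ) (s : S) (l : ℕ) (M : List (S × ℕ)) :
    segPhi R A t₀ ((s, l) :: M) = R s (t₀ + 1) (t₀ + l) * segPhiFrom R A s (t₀ + l) M := by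
  rcases M with _ | ⟨⟨s', l'⟩, M⟩ <;> simp [segPhi, segPhiFrom, mul_assoc]

theorem segPhiInto_cons_cons (t₀ : ℕ) (p q : S × ℕ) (L : List (S × ℕ)) (s : S) :
    segPhiInto R A t₀ (p :: q :: L) s =
      R p.1 (t₀ + 1) (t₀ + p.2) * A p.1 q.1 (t₀ + p.2) *
        segPhiInto R A (t₀ + p.2) (q :: L) s := by
  obtain ⟨x, hx⟩ : ∃ x, (q :: L).getLast? = some x := Option.ne_none_iff_exists'.1 (by simp)
  simp [segPhiInto, List.getLast?_cons_cons, hx, segPhi, add_assoc, mul_assoc]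

theorem segPhi_append_cons (t₀ : ℕ) (L : List (S × ℕ)) (s : S) (l : ℕ) (M : List (S × ℕ)) :
    segPhi R A t₀ (L ++ (s, l) :: M) =
      segPhiInto R A t₀ L s *
        R s (t₀ + (L.map Prod.snd).sum + 1) (t₀ + (L.map Prod.snd).sum + l) *
        segPhiFrom R A s (t₀ + (L.map Prod.snd).sum + l) M := by
  induction L generalizing t₀ with
  | nil => simp [segPhiInto, segPhi_cons]
  | cons p L ih =>
    rcases L with _ | ⟨q, L⟩
    · simp [segPhiInto, segPhi, segPhi_cons, mul_assoc]
    · rw [segPhiInto_cons_cons, List.cons_append, List.cons_append, segPhi, ← List.cons_append, ih]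
      simp [add_assoc, mul_assoc]
end Potential

section Masses

variable [Fintype S] (R : S → ℕ → ℕ → ℝ) (A : S → S → ℕ → ℝ) (s : S)

theorem finsum_segPhiInto_isComposition (i : ℕ) :
    ∑ᶠ L ∈ {L : List (S × ℕ) | IsComposition (i - 1) L}, segPhiInto R A 0 L s =
      if 1 < i then ∑ s' : S, fwdMass R A (i - 1) s' * A s' s (i - 1) else 1 := by
  split_ifs with hi
  · have hX :
        {L : List (S × ℕ) | IsComposition (i - 1) L} = {L | IsSegmentation 1 (i - 1) L} := by
      ext L
      simp [isSegmentation_iff, show 1 ≤ i - 1 by omega]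
    rw [hX, finsum_mem_eq_sum_fiberwise (hX ▸ isComposition_finite _)
      (fun L => L.getLast?.map Prod.fst) (fun L hL => by simpa using hL.1)]
    refine Finset.sum_congr rfl fun s' _ => ?_
    rw [fwdMass, finsum_mem_mul]
    refine finsum_mem_congr rfl fun L ⟨hL, hlast⟩ => ?_
    obtain ⟨q, hq, rfl⟩ := Option.map_eq_some_iff.1 hlast
    simp [segPhiInto, hq, (isSegmentation_iff.1 hL).2.2]
  · simp [show i - 1 = 0 by omega, isComposition_zero_iff, segPhiInto]

theorem finsum_segPhiFrom_isComposition (T j : ℕ) :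
    ∑ᶠ M ∈ {M : List (S × ℕ) | IsComposition (T - j) M}, segPhiFrom R A s j M =
      if j < T then ∑ s'' : S, A s s'' j * bwdMass R A T (j + 1) s'' else 1 := by
  split_ifs with hj
  · have hX :
        {M : List (S × ℕ) | IsComposition (T - j) M} = {M | IsSegmentation (j + 1) T M} := by
      ext M
      simp [isSegmentation_iff, hj, Nat.add_sub_add_right]
    rw [hX, finsum_mem_eq_sum_fiberwise (hX ▸ isComposition_finite _)
      (fun M => M.head?.map Prod.fst) (fun M hM => by simpa using hM.1)]
    refine Finset.sum_congr rfl fun s'' _ => ?_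
    rw [bwdMass, mul_finsum_mem, Nat.add_sub_cancel]
    refine finsum_mem_congr rfl fun M hM => ?_
    obtain ⟨q, hq, rfl⟩ := Option.map_eq_some_iff.1 hM.2
    simp [segPhiFrom, hq]
  · simp [show T - j = 0 by omega, isComposition_zero_iff, segPhiFrom]

end Masses

theorem setOf_hasSegment_eq_image {T i j : ℕ} (s : S) (hi : 1 ≤ i) (hij : i ≤ j) (hjT : j ≤ T) :
    {ζ : List (S × ℕ) | IsSegmentation 1 T ζ ∧ HasSegment s i j 0 ζ} =
      (fun p => p.1 ++ (s, j + 1 - i) :: p.2) ''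
        ({L | IsComposition (i - 1) L} ×ˢ {M | IsComposition (T - j) M}) := by
  ext ζ
  simp only [Set.mem_ofPred_eq, Set.mem_image, Set.mem_prod, Prod.exists, isSegmentation_iff,
    hasSegment_iff, IsComposition]
  constructor
  · rintro ⟨⟨-, hpos, hsum⟩, L, l, M, rfl, hL, hl⟩
    simp only [List.forall_mem_append, List.forall_mem_cons, List.map_append, List.map_cons,
      List.sum_append, List.sum_cons] at hpos hsum
    exact ⟨L, M, ⟨⟨hpos.1, by omega⟩, hpos.2.2, by omega⟩, by rw [show l = j + 1 - i by omega]⟩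
  · rintro ⟨L, M, ⟨⟨hLpos, hL⟩, hMpos, hM⟩, rfl⟩
    refine ⟨⟨by omega, ?_, ?_⟩, L, j + 1 - i, M, rfl, by omega, by omega⟩
    · simp only [List.forall_mem_append, List.forall_mem_cons]
      exact ⟨hLpos, by omega, hMpos⟩
    · simp only [List.map_append, List.map_cons, List.sum_append, List.sum_cons]
      omega

theorem injOn_append_cons {n : ℕ} (x : S × ℕ) (Y : Set (List (S × ℕ))) :
    Set.InjOn (fun p : List (S × ℕ) × List (S × ℕ) => p.1 ++ x :: p.2)
      ({L | IsComposition n L} ×ˢ Y) := by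
  rintro ⟨L₁, M₁⟩ ⟨h₁, -⟩ ⟨L₂, M₂⟩ ⟨h₂, -⟩ h
  obtain rfl := h₁.eq_of_append_eq_append h₂ h
  simpa using h

end

theorem semiCRF_segment_marginal_factorization_general {S : Type*} [Fintype S]
    (T : ℕ)
    (R : S → ℕ → ℕ → ℝ) (A : S → S → ℕ → ℝ)
    (s : S) (i j : ℕ) (hi : 1 ≤ i) (hij : i ≤ j) (hjT : j ≤ T) :
    segMass R A T s i j =
      (if 1 < i then ∑ s' : S, fwdMass R A (i - 1) s' * A s' s (i - 1) else 1) *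
        R s i j *
        (if j < T then ∑ s'' : S, A s s'' j * bwdMass R A T (j + 1) s'' else 1) := by
  have hglue : ∀ p ∈ {L | IsComposition (i - 1) L} ×ˢ {M | IsComposition (T - j) M},
      segPhi R A 0 (p.1 ++ (s, j + 1 - i) :: p.2) =
        (segPhiInto R A 0 p.1 s * R s i j) * segPhiFrom R A s j p.2 := by
    rintro ⟨L, M⟩ ⟨⟨-, hL⟩, -⟩
    rw [segPhi_append_cons, hL, show 0 + (i - 1) + 1 = i by omega,
      show 0 + (i - 1) + (j + 1 - i) = j by omega]
  rw [segMass, setOf_hasSegment_eq_image s hi hij hjT, finsum_mem_image (injOn_append_cons _ _),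
    finsum_mem_congr rfl hglue,
    finsum_mem_prod_mul (isComposition_finite _) (isComposition_finite _)
      (fun L => segPhiInto R A 0 L s * R s i j), ← finsum_mem_mul,
    finsum_segPhiInto_isComposition, finsum_segPhiFrom_isComposition]

/-- The total potential of all segmentations of `[1,T]` containing a prescribed
segment `(s, [i,j])` factorizes through the forward and backward masses:
`M(s,i,j) = Lft(s,i) · R(s,i,j) · Rgt(s,j)` where
`Lft(s,i) = Σ_{s'} α_{i-1}(s') A(s',s,i-1)` for `i > 1`, `Lft(s,1) = 1`, and
`Rgt(s,j) = Σ_{s''} A(s,s'',j) β_{j+1}(s'')` for `j < T`, `Rgt(s,T) = 1`. -/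
theorem semiCRF_segment_marginal_factorization {S : Type*} [Fintype S] [Nonempty S]
    (T : ℕ) (hT : 1 ≤ T)
    (R : S → ℕ → ℕ → ℝ) (A : S → S → ℕ → ℝ)
    (s : S) (i j : ℕ) (hi : 1 ≤ i) (hij : i ≤ j) (hjT : j ≤ T) :
    segMass R A T s i j =
      (if 1 < i then ∑ s' : S, fwdMass R A (i - 1) s' * A s' s (i - 1) else 1) *
        R s i j *
        (if j < T then ∑ s'' : S, A s s'' j * bwdMass R A T (j + 1) s'' else 1) :=
  semiCRF_segment_marginal_factorization_general T R A s i j hi hij hjT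
end

section
/- Gradient of the log-likelihood of a log-linear (conditional random field) model over a finite space: for every weight vector w : Fin n → ℝ and every coordinate k, the function t ↦ L(w + t·e_k) (where e_k is the k-th standard basis vector) is differentiable at t = 0 with derivative Σ_{x ∈ X} Q(x)·F(x)_k − Σ_{x ∈ X} P_w(x)·F(x)_k, i.e. the derivative equals the empirical expectation of the k-th feature minus its model expectation. -/
/-! Along the direction `e_k` the score of `x` is affine in `t`: it is
`s x + t F(x)_k` with `s x = Σ_i w_i F(x)_i`. Since
`Σ Q = 1`, the log-likelihood is `Σ_x Q(x) (s x + t F(x)_k) − log Σ_y exp (s y + t F(y)_k)`: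
an affine function minus a log-sum-exp, whose derivative is the softmax average of `F(·)_k`. -/

open Finset Real

theorem sum_add_mul_indicator_mul {ι : Type*} [Fintype ι] [DecidableEq ι]
    {R : Type*} [CommSemiring R] (w v : ι → R) (t : R) (k : ι) :
    ∑ i, (w i + t * (if i = k then 1 else 0)) * v i = ∑ i, w i * v i + t * v k := by
  simp [add_mul, sum_add_distrib]

section LogSumExp

variable {X : Type*} [Fintype X]

theorem sum_exp_pos [Nonempty X] (s : X → ℝ) : 0 < ∑ y, exp (s y) :=
  sum_pos (fun y _ => exp_pos (s y)) univ_nonempty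

theorem sum_mul_log_exp_div_sum_exp [Nonempty X] (Q s : X → ℝ) (hQ : ∑ x, Q x = 1) :
    ∑ x, Q x * log (exp (s x) / ∑ y, exp (s y)) = ∑ x, Q x * s x - log (∑ y, exp (s y)) := by
  simp_rw [log_div (exp_ne_zero _) (sum_exp_pos s).ne', log_exp, mul_sub, sum_sub_distrib,
    ← sum_mul, hQ, one_mul]

theorem hasDerivAt_sum_mul_add_mul (Q a b : X → ℝ) (t : ℝ) :
    HasDerivAt (fun t => ∑ x, Q x * (a x + t * b x)) (∑ x, Q x * b x) t := by
  refine HasDerivAt.fun_sum fun x _ => ?_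
  simpa using (((hasDerivAt_id t).mul_const (b x)).const_add (a x)).const_mul (Q x)

theorem hasDerivAt_log_sum_exp_add_mul [Nonempty X] (a b : X → ℝ) (t : ℝ) :
    HasDerivAt (fun t => log (∑ y, exp (a y + t * b y)))
      (∑ x, exp (a x + t * b x) / (∑ y, exp (a y + t * b y)) * b x) t := by
  have hZ : HasDerivAt (fun t => ∑ y, exp (a y + t * b y))
      (∑ y, exp (a y + t * b y) * b y) t := by
    refine HasDerivAt.fun_sum fun y _ => ?_
    simpa using (((hasDerivAt_id t).mul_const (b y)).const_add (a y)).exp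
  convert hZ.log (sum_exp_pos _).ne' using 1
  simp_rw [sum_div, div_mul_eq_mul_div]

end LogSumExp

theorem logLinear_logLikelihood_gradient_general
    {X : Type*} [Fintype X] [Nonempty X]
    (n : ℕ)
    (F : X → Fin n → ℝ) (Q : X → ℝ)
    (hQ1 : ∑ x : X, Q x = 1)
    (w : Fin n → ℝ) (k : Fin n) :
    HasDerivAt
      (fun t : ℝ =>
        ∑ x : X, Q x *
          Real.log
            (Real.exp (∑ i : Fin n, (w i + t * (if i = k then (1 : ℝ) else 0)) * F x i) /
              ∑ y : X, Real.exp (∑ i : Fin n, (w i + t * (if i = k then (1 : ℝ) else 0)) * F y i)))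
      ((∑ x : X, Q x * F x k) -
        ∑ x : X,
          (Real.exp (∑ i : Fin n, w i * F x i) /
            ∑ y : X, Real.exp (∑ i : Fin n, w i * F y i)) * F x k)
      0 := by
  set s : X → ℝ := fun x => ∑ i, w i * F x i
  set b : X → ℝ := fun x => F x k
  have hL : (fun t : ℝ => ∑ x, Q x * log (exp (∑ i, (w i + t * (if i = k then (1 : ℝ) else 0))
        * F x i) / ∑ y, exp (∑ i, (w i + t * (if i = k then (1 : ℝ) else 0)) * F y i)))
      = fun t => ∑ x, Q x * (s x + t * b x) - log (∑ y, exp (s y + t * b y)) := by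
    funext t
    simp only [sum_add_mul_indicator_mul]
    exact sum_mul_log_exp_div_sum_exp Q (fun x => s x + t * b x) hQ1
  rw [hL]
  simpa using (hasDerivAt_sum_mul_add_mul Q s b 0).fun_sub (hasDerivAt_log_sum_exp_add_mul s b 0)

/-- Gradient of the log-likelihood of a log-linear (CRF) model over a finite
space: for every weight vector `w` and coordinate `k`, the map
`t ↦ L(w + t·e_k)` is differentiable at `t = 0` with derivative equal to the
empirical expectation of the `k`-th feature minus its model expectation,
`Σ_x Q(x)·F(x)_k − Σ_x P_w(x)·F(x)_k`. -/
theorem logLinear_logLikelihood_gradient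
    {X : Type*} [Fintype X] [Nonempty X]
    (n : ℕ) (hn : 1 ≤ n)
    (F : X → Fin n → ℝ) (Q : X → ℝ)
    (hQ0 : ∀ x, 0 ≤ Q x) (hQ1 : ∑ x : X, Q x = 1)
    (w : Fin n → ℝ) (k : Fin n) :
    HasDerivAt
      (fun t : ℝ =>
        ∑ x : X, Q x *
          Real.log
            (Real.exp (∑ i : Fin n, (w i + t * (if i = k then (1 : ℝ) else 0)) * F x i) /
              ∑ y : X, Real.exp (∑ i : Fin n, (w i + t * (if i = k then (1 : ℝ) else 0)) * F y i)))
      ((∑ x : X, Q x * F x k) -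
        ∑ x : X,
          (Real.exp (∑ i : Fin n, w i * F x i) /
            ∑ y : X, Real.exp (∑ i : Fin n, w i * F y i)) * F x k)
      0 :=
  logLinear_logLikelihood_gradient_general n F Q hQ1 w k
end
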